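/- arXiv:1704.01933 — 9 statements merged into one kernel-verified Lean document; each statement's English description precedes it below -/
import Mathlib

section
/- Let k ≥ 1 be a natural number, let ã > 0 and b > 0, and let x1, x2, x3 > 0 satisfy the system x1 = ã·(b·x3^k + 1)/(x3^k + b), x2 = ã·(b·x2^k + 1)·x3^k/((x3^k + b)·x1^k), x3 = ã·(b·x3^k + 1)·x1^k/((x2^k + b)·x3^k). If x1 = x2, then x1 = x2 = x3. -/
theorem stmt1 (k : ℕ) (hk : 1 ≤ k) (a b x1 x2 x3 : ℝ)
    (ha : 0 < a) (hb : 0 < b) (hx1 : 0 < x1) (hx2 : 0 < x2) (hx3 : 0 < x3)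
    (e1 : x1 = a * (b * x3 ^ k + 1) / (x3 ^ k + b))
    (e2 : x2 = a * (b * x2 ^ k + 1) * x3 ^ k / ((x3 ^ k + b) * x1 ^ k))
    (e3 : x3 = a * (b * x3 ^ k + 1) * x1 ^ k / ((x2 ^ k + b) * x3 ^ k))
    (h : x1 = x2) :
    x1 = x2 ∧ x2 = x3 := by
  refine ⟨h, ?_⟩
  subst h
  have h3 : (0:ℝ) < x3 ^ k := pow_pos hx3 k
  have h1 : (0:ℝ) < x1 ^ k := pow_pos hx1 k
  have hd1 : x3 ^ k + b ≠ 0 := by positivity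
  have hd2 : (x3 ^ k + b) * x1 ^ k ≠ 0 := by positivity
  rw [eq_div_iff hd1] at e1
  rw [eq_div_iff hd2] at e2
  have key : x1 ^ k = x3 ^ k := by nlinarith [sq_nonneg (x1^k - x3^k)]
  exact pow_left_strictMonoOn₀ (n := k) (by omega) |>.injOn hx1.le hx3.le key
end

section
/- Let k ≥ 1 be a natural number, let ã > 0 and b > 0, and let x1, x2, x3 > 0 satisfy the system x1 = ã·(b·x3^k + 1)/(x3^k + b), x2 = ã·(b·x2^k + 1)·x3^k/((x3^k + b)·x1^k), x3 = ã·(b·x3^k + 1)·x1^k/((x2^k + b)·x3^k). If x1 = x3, then x1 = x2 = x3. -/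
theorem stmt2 (k : ℕ) (hk : 1 ≤ k) (a b x1 x2 x3 : ℝ)
    (ha : 0 < a) (hb : 0 < b) (hx1 : 0 < x1) (hx2 : 0 < x2) (hx3 : 0 < x3)
    (e1 : x1 = a * (b * x3 ^ k + 1) / (x3 ^ k + b))
    (e2 : x2 = a * (b * x2 ^ k + 1) * x3 ^ k / ((x3 ^ k + b) * x1 ^ k))
    (e3 : x3 = a * (b * x3 ^ k + 1) * x1 ^ k / ((x2 ^ k + b) * x3 ^ k))
    (h : x1 = x3) :
    x1 = x2 ∧ x2 = x3 := by
  subst h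
  have h3 : (0:ℝ) < x1 ^ k := pow_pos hx1 k
  have h2 : (0:ℝ) < x2 ^ k := pow_pos hx2 k
  have d1 : x1 ^ k + b ≠ 0 := by positivity
  have d3 : (x2 ^ k + b) * x1 ^ k ≠ 0 := by positivity
  rw [eq_div_iff d1] at e1
  rw [eq_div_iff d3] at e3
  -- cancel x1^k in e3
  have e3' : x1 * (x2 ^ k + b) = a * (b * x1 ^ k + 1) :=
    mul_right_cancel₀ (ne_of_gt h3) (by ring_nf; ring_nf at e3; linarith)
  have key : x2 ^ k = x1 ^ k := by
    have := e1.trans e3'.symm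
    have := mul_left_cancel₀ (ne_of_gt hx1) (by linarith : x1 * (x1 ^ k + b) = x1 * (x2 ^ k + b))
    linarith
  have hxx : x2 = x1 := by
    rcases lt_trichotomy x2 x1 with hlt | heq | hgt
    · exact absurd key (ne_of_lt (pow_lt_pow_left₀ hlt hx2.le (by omega)))
    · exact heq
    · exact absurd key.symm (ne_of_lt (pow_lt_pow_left₀ hgt hx1.le (by omega)))
  exact ⟨hxx.symm, hxx⟩
end

section
/- Let k ≥ 1 be a natural number, let ã > 0 and b > 0, and let x1, x2, x3 > 0 satisfy the system x1 = ã·(b·x3^k + 1)/(x3^k + b), x2 = ã·(b·x2^k + 1)·x3^k/((x3^k + b)·x1^k), x3 = ã·(b·x3^k + 1)·x1^k/((x2^k + b)·x3^k). If x2 = x3, then x1 = x2 = x3. -/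
theorem stmt3 (k : ℕ) (hk : 1 ≤ k) (a b x1 x2 x3 : ℝ)
    (ha : 0 < a) (hb : 0 < b) (hx1 : 0 < x1) (hx2 : 0 < x2) (hx3 : 0 < x3)
    (e1 : x1 = a * (b * x3 ^ k + 1) / (x3 ^ k + b))
    (e2 : x2 = a * (b * x2 ^ k + 1) * x3 ^ k / ((x3 ^ k + b) * x1 ^ k))
    (e3 : x3 = a * (b * x3 ^ k + 1) * x1 ^ k / ((x2 ^ k + b) * x3 ^ k))
    (h : x2 = x3) :
    x1 = x2 ∧ x2 = x3 := by
  subst h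
  refine ⟨?_, rfl⟩
  have hd : (0:ℝ) < x2 ^ k + b := by positivity
  have hx2k : (0:ℝ) < x2 ^ k := by positivity
  have he1 : x1 * (x2 ^ k + b) = a * (b * x2 ^ k + 1) := by
    field_simp at e1
    linarith
  have he3 : x2 * ((x2 ^ k + b) * x2 ^ k) = a * (b * x2 ^ k + 1) * x1 ^ k := by
    field_simp at e3
    linarith
  rw [← he1] at he3
  have key : x2 ^ (k + 1) * (x2 ^ k + b) = x1 ^ (k + 1) * (x2 ^ k + b) := by
    ring_nf
    ring_nf at he3
    linarith
  have key2 : x2 ^ (k + 1) = x1 ^ (k + 1) :=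
    mul_right_cancel₀ (ne_of_gt hd) key
  exact ((pow_left_inj₀ hx2.le hx1.le (by omega)).mp key2).symm
end

section
/- Let k ≥ 1, ã > 0, b > 0, and let x1, x2, x3 > 0 satisfy the system x1 = ã·(b·x3^k + 1)/(x3^k + b), x2 = ã·(b·x2^k + 1)·x3^k/((x3^k + b)·x1^k), x3 = ã·(b·x3^k + 1)·x1^k/((x2^k + b)·x3^k). Then x1 = x2 = x3 if and only if at least one of the equalities x1 = x2, x1 = x3, x2 = x3 holds. -/
private lemma pow_inj' {x y : ℝ} (hx : 0 < x) (hy : 0 < y) {n : ℕ} (hn : n ≠ 0)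
    (h : x ^ n = y ^ n) : x = y := by
  rcases lt_trichotomy x y with h' | h' | h'
  · exact absurd h (ne_of_lt (pow_lt_pow_left₀ h' hx.le hn))
  · exact h'
  · exact absurd h.symm (ne_of_lt (pow_lt_pow_left₀ h' hy.le hn))

theorem stmt4 (k : ℕ) (hk : 1 ≤ k) (a b x1 x2 x3 : ℝ)
    (ha : 0 < a) (hb : 0 < b) (hx1 : 0 < x1) (hx2 : 0 < x2) (hx3 : 0 < x3)
    (e1 : x1 = a * (b * x3 ^ k + 1) / (x3 ^ k + b))
    (e2 : x2 = a * (b * x2 ^ k + 1) * x3 ^ k / ((x3 ^ k + b) * x1 ^ k))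
    (e3 : x3 = a * (b * x3 ^ k + 1) * x1 ^ k / ((x2 ^ k + b) * x3 ^ k)) :
    (x1 = x2 ∧ x2 = x3) ↔ (x1 = x2 ∨ x1 = x3 ∨ x2 = x3) := by
  have hk0 : k ≠ 0 := by omega
  constructor
  · rintro ⟨h1, h2⟩; exact Or.inl h1
  · rintro (h | h | h)
    · -- x1 = x2 : use e1 and e2 to get x1 = x3
      subst h
      rw [eq_div_iff (by positivity)] at e1 e2
      have key : a * x1 ^ k = a * x3 ^ k := by
        linear_combination e2 - x1 ^ k * e1
      have := pow_inj' hx1 hx3 hk0 (mul_left_cancel₀ ha.ne' key)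
      exact ⟨rfl, this ▸ rfl⟩
    · -- x1 = x3 : use e1 and e3 to get x1 = x2
      subst h
      rw [eq_div_iff (by positivity)] at e1 e3
      have key : (x1 * x1 ^ k) * x1 ^ k = (x1 * x1 ^ k) * x2 ^ k := by
        linear_combination x1 ^ k * e1 - e3
      have h12 := (pow_inj' hx1 hx2 hk0
        (mul_left_cancel₀ (by positivity : (x1 * x1 ^ k) ≠ 0) key))
      exact ⟨h12, h12.symm⟩
    · -- x2 = x3 : use e1 and e3 to get x1 = x2
      subst h
      rw [eq_div_iff (by positivity)] at e1 e3
      have key : (x2 ^ k + b) * (x2 * x2 ^ k) = (x2 ^ k + b) * (x1 * x1 ^ k) := by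
        linear_combination e3 - x1 ^ k * e1
      have key2 : x2 ^ (k + 1) = x1 ^ (k + 1) := by
        rw [pow_succ, pow_succ, mul_comm (x2 ^ k), mul_comm (x1 ^ k)]
        exact mul_left_cancel₀ (by positivity : (x2 ^ k + b) ≠ 0) key
      have h12 := (pow_inj' hx2 hx1 (Nat.succ_ne_zero k) key2).symm
      exact ⟨h12, rfl⟩
end

section
/- Let b > 0 and suppose x, m, t > 0 with m ≠ 1 satisfy b·(m² − m)·t²·x² = m − t² and (m²·t − 1)·t²·x² = b·(1 − t³). Then either 1 < t and t < m^{-2}, or m^{-2} < t and t < 1, or t = 1 and m²t = 1. -/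
theorem stmt6 (b x m t : ℝ)
    (hb : 0 < b) (hx : 0 < x) (hm : 0 < m) (ht : 0 < t) (hm1 : m ≠ 1)
    (e1 : b * (m ^ 2 - m) * t ^ 2 * x ^ 2 = m - t ^ 2)
    (e2 : (m ^ 2 * t - 1) * t ^ 2 * x ^ 2 = b * (1 - t ^ 3)) :
    (1 < t ∧ t < (m ^ 2)⁻¹) ∨ ((m ^ 2)⁻¹ < t ∧ t < 1) ∨ (t = 1 ∧ m ^ 2 * t = 1) := by
  have hx2 : 0 < t ^ 2 * x ^ 2 := by positivity
  have hm2 : (0:ℝ) < m ^ 2 := by positivity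
  rcases lt_trichotomy t 1 with h | h | h
  · right; left
    have h3 : 0 < 1 - t ^ 3 := by nlinarith
    have hpos : 0 < m ^ 2 * t - 1 := by nlinarith [mul_pos hb h3]
    refine ⟨?_, h⟩
    rw [inv_eq_one_div, div_lt_iff₀ hm2]
    nlinarith
  · right; right
    refine ⟨h, ?_⟩
    subst h
    have : (m ^ 2 - 1) * (1 ^ 2 * x ^ 2) = 0 := by nlinarith
    have hx2ne : (1:ℝ) ^ 2 * x ^ 2 ≠ 0 := ne_of_gt (by positivity)
    have hm21 : m ^ 2 - 1 = 0 := by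
      rcases mul_eq_zero.mp this with h' | h'
      · exact h'
      · exact absurd h' hx2ne
    nlinarith
  · left
    have h3 : 1 - t ^ 3 < 0 := by nlinarith
    have hneg : m ^ 2 * t - 1 < 0 := by nlinarith [mul_pos hb (by linarith : 0 < t ^ 3 - 1)]
    refine ⟨h, ?_⟩
    rw [inv_eq_one_div, lt_div_iff₀ hm2]
    nlinarith
end

section
/- Let b = (11/6)^{1/2} and ã = (6/7)·b^{3/2}. Then (x1, x2, x3) = (√b, 3√b, √b/2) satisfies the system x1 = ã·(b·x3² + 1)/(x3² + b), x2 = ã·(b·x2² + 1)·x3²/((x3² + b)·x1²), x3 = ã·(b·x3² + 1)·x1²/((x2² + b)·x3²), and x1, x2, x3 are pairwise distinct. -/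
theorem stmt7 (b a x1 x2 x3 : ℝ)
    (hb : b = Real.sqrt (11 / 6)) (ha : a = 6 / 7 * Real.sqrt (b ^ 3))
    (h1 : x1 = Real.sqrt b) (h2 : x2 = 3 * Real.sqrt b) (h3 : x3 = Real.sqrt b / 2) :
    x1 = a * (b * x3 ^ 2 + 1) / (x3 ^ 2 + b) ∧
    x2 = a * (b * x2 ^ 2 + 1) * x3 ^ 2 / ((x3 ^ 2 + b) * x1 ^ 2) ∧
    x3 = a * (b * x3 ^ 2 + 1) * x1 ^ 2 / ((x2 ^ 2 + b) * x3 ^ 2) ∧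
    x1 ≠ x2 ∧ x1 ≠ x3 ∧ x2 ≠ x3 := by
  have hbpos : 0 < b := by
    rw [hb]; exact Real.sqrt_pos.mpr (by norm_num)
  have hb2 : b ^ 2 = 11 / 6 := by
    rw [hb, sq, Real.mul_self_sqrt (by norm_num)]
  set s := Real.sqrt b with hsdef
  have hspos : 0 < s := Real.sqrt_pos.mpr hbpos
  have hs2 : s ^ 2 = b := Real.sq_sqrt hbpos.le
  have hsqrt3 : Real.sqrt (b ^ 3) = s ^ 3 := by
    rw [show b ^ 3 = (s ^ 3) ^ 2 by rw [← hs2]; ring]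
    exact Real.sqrt_sq (by positivity)
  have ha' : a = 6 / 7 * s ^ 3 := by rw [ha, hsqrt3]
  have hs4 : s ^ 4 = 11 / 6 := by rw [show s ^ 4 = (s ^ 2) ^ 2 by ring, hs2]; exact hb2
  subst h1 h2 h3
  refine ⟨?_, ?_, ?_, ?_, ?_, ?_⟩
  · rw [ha', ← hs2]
    rw [eq_div_iff (by positivity)]
    linear_combination (-(3/14) * s ^ 3) * hs4
  · rw [ha', ← hs2]
    rw [eq_div_iff (by positivity)]
    linear_combination (-(27/14) * s ^ 5) * hs4
  · rw [ha', ← hs2]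
    rw [eq_div_iff (by positivity)]
    linear_combination (-(3/14) * s ^ 5) * hs4
  · intro h; nlinarith
  · intro h; nlinarith
  · intro h; nlinarith
end

section
/- Let ã > 0, b > 0 and suppose x, m, t > 0 with m ≠ 1, m·t ≠ 1, satisfy the three equations x = ã(b t² x² + 1)/(t² x² + b), m x = ã t² (b m² x² + 1)/((t² x² + b) x²)·x², t³ x = ã (b t² x² + 1)/((m² x² + b) x²)·x². Then x = ã·b^{-1}·(m² t − 1)/(t·(m² − m)) and ã²·(m² t − 1)² = b·(m² − m)·(m − t²) and b²·(m² − m)·(1 − t³) = (m − t²)·(m² t − 1). -/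
/-!
Write `u = t²x²`. After clearing denominators, `m · (first equation) − (second equation)` is
`a` times an equation that is linear in `u`, namely `b u (m² − m) = m − t²`, and the third
equation, divided by the first, is linear in `u` as well: `u (m² t − 1) = b (1 − t³)`.
Substituting both into the first equation leaves `x · b t (m² − m) = a (m² t − 1)`, which is the
formula for `x`; squaring it and eliminating `u` between the two linear relations gives the other
two identities.
-/

section

variable {K : Type*} [Field K] {a b x m t : K}

theorem b_mul_sq_mul_eq_sub_of_eq_of_eq (ha : a ≠ 0)
    (h₁ : x * (t ^ 2 * x ^ 2 + b) = a * (b * t ^ 2 * x ^ 2 + 1))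
    (h₂ : m * x * (t ^ 2 * x ^ 2 + b) = a * t ^ 2 * (b * m ^ 2 * x ^ 2 + 1)) :
    b * (t ^ 2 * x ^ 2) * (m ^ 2 - m) = m - t ^ 2 :=
  mul_left_cancel₀ ha (by linear_combination m * h₁ - h₂)

theorem sq_mul_eq_of_eq_of_eq (hx : x ≠ 0)
    (h₁ : x * (t ^ 2 * x ^ 2 + b) = a * (b * t ^ 2 * x ^ 2 + 1))
    (h₃ : t ^ 3 * x * (m ^ 2 * x ^ 2 + b) = a * (b * t ^ 2 * x ^ 2 + 1)) :
    t ^ 2 * x ^ 2 * (m ^ 2 * t - 1) = b * (1 - t ^ 3) :=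
  mul_left_cancel₀ hx (by linear_combination h₃ - h₁)

theorem mul_eq_of_linear_relations (hd : t ^ 2 * x ^ 2 + b ≠ 0)
    (h₁ : x * (t ^ 2 * x ^ 2 + b) = a * (b * t ^ 2 * x ^ 2 + 1))
    (hA : b * (t ^ 2 * x ^ 2) * (m ^ 2 - m) = m - t ^ 2)
    (hB : t ^ 2 * x ^ 2 * (m ^ 2 * t - 1) = b * (1 - t ^ 3)) :
    x * (b * t * (m ^ 2 - m)) = a * (m ^ 2 * t - 1) :=
  mul_right_cancel₀ hd (by linear_combination b * t * (m ^ 2 - m) * h₁ + a * b * t * hA - a * hB)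

end

theorem stmt8_general (a b x m t : ℝ)
    (ha : 0 < a) (hb : 0 < b) (hx : 0 < x) (hm : 0 < m) (ht : 0 < t)
    (hm1 : m ≠ 1)
    (e1 : x = a * (b * t ^ 2 * x ^ 2 + 1) / (t ^ 2 * x ^ 2 + b))
    (e2 : m * x = a * t ^ 2 * (b * m ^ 2 * x ^ 2 + 1) / ((t ^ 2 * x ^ 2 + b) * x ^ 2) * x ^ 2)
    (e3 : t ^ 3 * x = a * (b * t ^ 2 * x ^ 2 + 1) / ((m ^ 2 * x ^ 2 + b) * x ^ 2) * x ^ 2) :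
    x = a * b⁻¹ * (m ^ 2 * t - 1) / (t * (m ^ 2 - m)) ∧
    a ^ 2 * (m ^ 2 * t - 1) ^ 2 = b * (m ^ 2 - m) * (m - t ^ 2) ∧
    b ^ 2 * (m ^ 2 - m) * (1 - t ^ 3) = (m - t ^ 2) * (m ^ 2 * t - 1) := by
  have hx0 : x ≠ 0 := hx.ne'
  have hd₁ : t ^ 2 * x ^ 2 + b ≠ 0 := by positivity
  have hd₂ : m ^ 2 * x ^ 2 + b ≠ 0 := by positivity
  have hmm : m ^ 2 - m ≠ 0 := by
    rw [sq, ← mul_sub_one]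
    exact mul_ne_zero hm.ne' (sub_ne_zero.mpr hm1)
  field_simp at e1 e2 e3
  have h₁ : x * (t ^ 2 * x ^ 2 + b) = a * (b * t ^ 2 * x ^ 2 + 1) := by linear_combination e1
  have hA := b_mul_sq_mul_eq_sub_of_eq_of_eq (m := m) ha.ne' h₁ (by linear_combination e2)
  have hB := sq_mul_eq_of_eq_of_eq (m := m) hx0 h₁ (by linear_combination e3)
  have hX := mul_eq_of_linear_relations hd₁ h₁ hA hB
  refine ⟨?_, ?_, ?_⟩
  · field_simp
    linear_combination hX
  · linear_combination -(x * b * t * (m ^ 2 - m) + a * (m ^ 2 * t - 1)) * hX + b * (m ^ 2 - m) * hA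
  · linear_combination (m ^ 2 * t - 1) * hA - b * (m ^ 2 - m) * hB

theorem stmt8 (a b x m t : ℝ)
    (ha : 0 < a) (hb : 0 < b) (hx : 0 < x) (hm : 0 < m) (ht : 0 < t)
    (hm1 : m ≠ 1) (hmt : m * t ≠ 1)
    (e1 : x = a * (b * t ^ 2 * x ^ 2 + 1) / (t ^ 2 * x ^ 2 + b))
    (e2 : m * x = a * t ^ 2 * (b * m ^ 2 * x ^ 2 + 1) / ((t ^ 2 * x ^ 2 + b) * x ^ 2) * x ^ 2)
    (e3 : t ^ 3 * x = a * (b * t ^ 2 * x ^ 2 + 1) / ((m ^ 2 * x ^ 2 + b) * x ^ 2) * x ^ 2) :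
    x = a * b⁻¹ * (m ^ 2 * t - 1) / (t * (m ^ 2 - m)) ∧
    a ^ 2 * (m ^ 2 * t - 1) ^ 2 = b * (m ^ 2 - m) * (m - t ^ 2) ∧
    b ^ 2 * (m ^ 2 - m) * (1 - t ^ 3) = (m - t ^ 2) * (m ^ 2 * t - 1) :=
  stmt8_general a b x m t ha hb hx hm ht hm1 e1 e2 e3
end

section
/- Let c, d > 0 and define g(u) = (c·d·u² + 1)/(c·u² + d) for u > 0. If d < 3, then g has exactly one fixed point in (0, ∞). -/
lemma add_inv_ge_two (x y : ℝ) (hx : 0 < x) (hy : 0 < y) (h : x * y = 1) :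
    2 ≤ x + y := by nlinarith [sq_nonneg (x - y)]

-- Uniqueness of positive roots of the cubic c u^3 - c d u^2 + d u - 1 when d < 3
lemma cubic_root_unique (c d u v : ℝ) (hc : 0 < c) (hd : 0 < d) (hd3 : d < 3)
    (hu : 0 < u) (hv : 0 < v)
    (hue : c * u ^ 3 - c * d * u ^ 2 + d * u - 1 = 0)
    (hve : c * v ^ 3 - c * d * v ^ 2 + d * v - 1 = 0) : u = v := by
  by_contra hne
  have hA : c * (u ^ 2 + u * v + v ^ 2) - c * d * (u + v) + d = 0 := by
    have h3 : (u - v) * (c * (u ^ 2 + u * v + v ^ 2) - c * d * (u + v) + d) = 0 := by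
      linear_combination hue - hve
    rcases mul_eq_zero.mp h3 with h | h
    · exact absurd (sub_eq_zero.mp h) hne
    · exact h
  set w : ℝ := d - u - v with hwdef
  have hprod : c * u * v * w = 1 := by
    simp only [hwdef]
    linear_combination hue - u * hA
  have hwpos : 0 < w := by
    by_contra hw
    push_neg at hw
    nlinarith [mul_pos (mul_pos hc hu) hv]
  have hpair : c * (u * v + u * w + v * w) = d := by
    simp only [hwdef]
    linear_combination -hA
  have hsum : u + v + w = d := by simp only [hwdef]; ring
  have h1 : u * (c * v * w) = 1 := by linear_combination hprod
  have h2 : v * (c * u * w) = 1 := by linear_combination hprod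
  have h3 : w * (c * u * v) = 1 := by linear_combination hprod
  have hy1 : 0 < c * v * w := by positivity
  have hy2 : 0 < c * u * w := by positivity
  have hy3 : 0 < c * u * v := by positivity
  have a1 : 2 ≤ u + c * v * w := add_inv_ge_two _ _ hu hy1 h1
  have a2 : 2 ≤ v + c * u * w := add_inv_ge_two _ _ hv hy2 h2
  have a3 : 2 ≤ w + c * u * v := add_inv_ge_two _ _ hwpos hy3 h3
  have hpair' : c * v * w + c * u * w + c * u * v = d := by linear_combination hpair
  linarith [a1, a2, a3, hsum, hpair']

theorem stmt10 (c d : ℝ) (hc : 0 < c) (hd : 0 < d) (hd3 : d < 3) :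
    ∃! u : ℝ, 0 < u ∧ (c * d * u ^ 2 + 1) / (c * u ^ 2 + d) = u := by
  have key : ∀ u : ℝ, 0 < u →
      ((c * d * u ^ 2 + 1) / (c * u ^ 2 + d) = u ↔
        c * u ^ 3 - c * d * u ^ 2 + d * u - 1 = 0) := by
    intro u hu
    rw [div_eq_iff (by positivity)]
    constructor <;> intro h <;> linear_combination -h
  set f : ℝ → ℝ := fun u => c * u ^ 3 - c * d * u ^ 2 + d * u - 1 with hfdef
  set b : ℝ := d + 1 + 1 / c with hbdef
  have hb0 : (0 : ℝ) ≤ b := by positivity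
  have hcinv : c * (1 / c) = 1 := mul_one_div_cancel (ne_of_gt hc)
  have hb1 : 1 < b := by
    have h : 0 < 1 / c := by positivity
    simp only [hbdef]; linarith
  have he : c * b ^ 3 - c * d * b ^ 2 = c * b ^ 2 + b ^ 2 := by
    have hbd : b - d = 1 + 1 / c := by simp only [hbdef]; ring
    have : c * b ^ 3 - c * d * b ^ 2 = c * b ^ 2 * (b - d) := by ring
    rw [this, hbd]
    linear_combination b ^ 2 * hcinv
  have hfb : 0 < f b := by
    have hb2 : 1 < b ^ 2 := by nlinarith
    have : 0 < d * b := by positivity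
    simp only [hfdef]
    nlinarith [mul_pos hc (lt_trans one_pos hb2)]
  have hcont : ContinuousOn f (Set.Icc 0 b) := by fun_prop
  have h0mem : (0 : ℝ) ∈ Set.Icc (f 0) (f b) := by
    constructor
    · simp only [hfdef]; norm_num
    · exact le_of_lt hfb
  obtain ⟨u, huI, hueq⟩ := intermediate_value_Icc hb0 hcont h0mem
  have hupos : 0 < u := by
    rcases lt_or_eq_of_le huI.1 with h | h
    · exact h
    · exfalso; rw [← h] at hueq; simp only [hfdef] at hueq; norm_num at hueq
  refine ⟨u, ⟨hupos, (key u hupos).mpr hueq⟩, ?_⟩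
  rintro v ⟨hvpos, hveq⟩
  exact cubic_root_unique c d v u hc hd hd3 hvpos hupos ((key v hvpos).mp hveq)
    hueq
end

section
/- Let m > 2 be an integer and b > 0 with b ≤ (m/(m−2))². Then for every a > 0 the equation ((1+x)/(b+x))^{m-1} = a·x has exactly one solution x ≥ 0 with x > 0. -/
/-!
Put `h x = x * ((b + x) / (1 + x)) ^ n`; for `x > 0` the equation reads `h x = a⁻¹`.
Since `h 0 = 0` and `h x ≥ x * (min b 1) ^ n`, every value in `[0, ∞)` is attained.
The derivative of `h` has the sign of `(1 + x) * (b + x) - n * (b - 1) * x`, which equals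
`(x - √b) ^ 2 + x * (√b + 1) * (n + 1 - √b * (n - 1))`; when `√b * (n - 1) ≤ n + 1` it is
positive except possibly at `x = √b`, so `h` is strictly increasing.
-/

open Set

theorem StrictMonoOn.of_hasDerivAt_pos_of_ne {D : Set ℝ} (hD : Convex ℝ D) {f f' : ℝ → ℝ}
    {c : ℝ} (hf : ContinuousOn f D) (hf' : ∀ x ∈ interior D, HasDerivAt f (f' x) x)
    (hf'₀ : ∀ x ∈ interior D, x ≠ c → 0 < f' x) : StrictMonoOn f D := by
  have off_c : ∀ x ∈ D, ∀ y ∈ D, x < y → c ∉ Ioo x y → f x < f y := by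
    intro x hx y hy hxy hc
    have hsub : Icc x y ⊆ D := hD.ordConnected.out hx hy
    have hint : interior (Icc x y) ⊆ interior D := interior_mono hsub
    refine strictMonoOn_of_hasDerivWithinAt_pos (convex_Icc x y) (hf.mono hsub)
      (fun z hz ↦ (hf' z (hint hz)).hasDerivWithinAt) (fun z hz ↦ hf'₀ z (hint hz) ?_)
      (left_mem_Icc.2 hxy.le) (right_mem_Icc.2 hxy.le) hxy
    rintro rfl
    exact hc (by simpa using hz)
  intro x hx y hy hxy
  by_cases hc : c ∈ Ioo x y
  · have hcD : c ∈ D := hD.ordConnected.out hx hy (Ioo_subset_Icc_self hc)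
    exact (off_c x hx c hcD hc.1 (by simp)).trans (off_c c hcD y hy hc.2 (by simp))
  · exact off_c x hx y hy hxy hc

noncomputable def prestonFun (b : ℝ) (n : ℕ) (x : ℝ) : ℝ := x * ((b + x) / (1 + x)) ^ n

lemma prestonFun_eq_inv_iff {a b x : ℝ} (n : ℕ) (ha : 0 < a) (hb : 0 < b) (hx : 0 < x) :
    prestonFun b n x = a⁻¹ ↔ ((1 + x) / (b + x)) ^ n = a * x := by
  have hr : 0 < ((1 + x) / (b + x)) ^ n := by positivity
  rw [prestonFun, ← inv_div, inv_pow, ← div_eq_mul_inv, div_eq_iff hr.ne', eq_comm,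
    inv_mul_eq_iff_eq_mul₀ ha.ne', eq_comm]

lemma hasDerivAt_prestonFun (n : ℕ) {b x : ℝ} (h1 : 1 + x ≠ 0) (hb : b + x ≠ 0) :
    HasDerivAt (prestonFun b n)
      (((b + x) / (1 + x)) ^ n * ((1 + x) * (b + x) - n * (b - 1) * x) / ((1 + x) * (b + x)))
      x := by
  have hr : HasDerivAt (fun y ↦ (b + y) / (1 + y)) ((1 - b) / (1 + x) ^ 2) x := by
    refine (((hasDerivAt_id' x).const_add b).div ((hasDerivAt_id' x).const_add 1) h1).congr_deriv
      ?_
    ring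
  refine ((hasDerivAt_id' x).mul (hr.fun_pow n)).congr_deriv ?_
  -- with `b` written through `r = (b + x) / (1 + x)`, both sides become rational in `r` and `x`
  have hr0 : (b + x) / (1 + x) ≠ 0 := div_ne_zero hb h1
  have hbr : b = (b + x) / (1 + x) * (1 + x) - x := by field_simp; ring
  generalize (b + x) / (1 + x) = r at hr0 hbr ⊢
  subst hbr
  rcases n with _ | k
  · simp only [CharP.cast_eq_zero]; field_simp; ring
  · rw [Nat.add_sub_cancel]; push_cast; field_simp; ring

lemma preston_quadratic_pos {n b x : ℝ} (hb : 0 ≤ b) (hbn : √b * (n - 1) ≤ n + 1)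
    (hx : 0 < x) (hxb : x ≠ √b) : 0 < (1 + x) * (b + x) - n * (b - 1) * x := by
  have hsq : (1 + x) * (b + x) - n * (b - 1) * x
      = (x - √b) ^ 2 + x * (√b + 1) * (n + 1 - √b * (n - 1)) := by
    have := Real.sq_sqrt hb
    linear_combination (n * x - x - 1) * this
  rw [hsq]
  have : 0 < (x - √b) ^ 2 := by positivity [sub_ne_zero.2 hxb]
  have : 0 ≤ x * (√b + 1) * (n + 1 - √b * (n - 1)) := by
    have := Real.sqrt_nonneg b
    have : 0 ≤ n + 1 - √b * (n - 1) := by linarith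
    positivity
  linarith

lemma continuousOn_prestonFun (b : ℝ) (n : ℕ) : ContinuousOn (prestonFun b n) (Ici 0) := by
  have hr : ContinuousOn (fun x : ℝ ↦ (b + x) / (1 + x)) (Ici 0) :=
    (continuousOn_const.add continuousOn_id).div (continuousOn_const.add continuousOn_id)
      fun x hx ↦ by simp only [mem_Ici] at hx; positivity
  exact continuousOn_id.mul (hr.pow n)

lemma strictMonoOn_prestonFun (n : ℕ) {b : ℝ} (hb : 0 < b) (hbn : √b * (n - 1) ≤ n + 1) :
    StrictMonoOn (prestonFun b n) (Ici 0) := by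
  refine StrictMonoOn.of_hasDerivAt_pos_of_ne (convex_Ici 0) (continuousOn_prestonFun b n)
    (fun x hx ↦ hasDerivAt_prestonFun n ?_ ?_) (c := √b) fun x hx hxb ↦ ?_
  all_goals rw [interior_Ici, mem_Ioi] at hx
  · positivity
  · positivity
  · have := preston_quadratic_pos hb.le hbn hx hxb
    positivity

lemma surjOn_prestonFun (n : ℕ) {b : ℝ} (hb : 0 < b) :
    SurjOn (prestonFun b n) (Ici 0) (Ici 0) := by
  intro y hy
  rw [mem_Ici] at hy
  set c := min b 1
  have hc : 0 < c := lt_min hb one_pos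
  set X := y / c ^ n
  have hX : 0 ≤ X := by positivity
  have hcX : c ≤ (b + X) / (1 + X) := by
    rw [le_div_iff₀ (by positivity)]
    nlinarith [min_le_left b 1, min_le_right b 1]
  have hyX : y ≤ prestonFun b n X := calc
    y = X * c ^ n := (div_mul_cancel₀ y (by positivity)).symm
    _ ≤ prestonFun b n X := by unfold prestonFun; gcongr
  obtain ⟨x, hx, rfl⟩ := intermediate_value_Icc hX ((continuousOn_prestonFun b n).mono
    fun z hz ↦ hz.1) ⟨by simpa [prestonFun] using hy, hyX⟩
  exact ⟨x, hx.1, rfl⟩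

theorem existsUnique_pos_div_pow_eq_mul (n : ℕ) {a b : ℝ} (ha : 0 < a) (hb : 0 < b)
    (hbn : √b * (n - 1) ≤ n + 1) : ∃! x : ℝ, 0 < x ∧ ((1 + x) / (b + x)) ^ n = a * x := by
  obtain ⟨x, hx, hxa⟩ := surjOn_prestonFun n hb (inv_nonneg.2 ha.le : a⁻¹ ∈ Ici 0)
  have hx : 0 < x := (mem_Ici.1 hx).lt_of_ne <| by
    rintro rfl
    exact (inv_pos.2 ha).ne (by rw [← hxa]; simp [prestonFun])
  refine ⟨x, ⟨hx, (prestonFun_eq_inv_iff n ha hb hx).1 hxa⟩, fun y ⟨hy, hya⟩ ↦ ?_⟩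
  refine (strictMonoOn_prestonFun n hb hbn).injOn hy.le hx.le ?_
  rw [hxa, prestonFun_eq_inv_iff n ha hb hy]
  exact hya

theorem stmt14 (m : ℕ) (hm : 2 < m) (b : ℝ) (hb : 0 < b)
    (hbm : b ≤ ((m : ℝ) / (m - 2)) ^ 2) :
    ∀ a : ℝ, 0 < a →
      ∃! x : ℝ, 0 < x ∧ ((1 + x) / (b + x)) ^ (m - 1) = a * x := by
  intro a ha
  refine existsUnique_pos_div_pow_eq_mul (m - 1) ha hb ?_
  have hm2 : (0 : ℝ) < m - 2 := by
    have : (2 : ℝ) < m := by exact_mod_cast hm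
    linarith
  have hsqrt : √b ≤ m / (m - 2) := Real.sqrt_le_left (by positivity) |>.2 hbm
  rw [Nat.cast_sub (by omega : 1 ≤ m)]
  push_cast
  have := (le_div_iff₀ hm2).1 hsqrt
  linarith
end
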